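/- Let X be a normed space, X_h ⊆ X_ext a finite-dimensional subspace of a normed space (X_ext, ERR) containing the exact solution space, and let u ∈ X_ext and U ∈ X_h. Let N be a norm on X_h. Suppose there are constants c_stab, C_cons > 0 such that (stability) for the discrete solution U and any Ũ ∈ X_h, c_stab·N(U − Ũ) ≤ sup_{V≠0} B(U − Ũ, V)/‖V‖₂; (consistency) sup_{V≠0} B(U − Ũ, V)/‖V‖₂ ≤ C_cons·ERR(u, Ũ) for all Ũ ∈ X_h; and (triangle) ERR(u, U) ≤ ERR(u, Ũ) + N(U − Ũ) for all Ũ ∈ X_h. Then ERR(u, U) ≤ (1 + C_cons/c_stab)·inf_{Ũ ∈ X_h} ERR(u, Ũ). -/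
import Mathlib

/-- Abstract quasi-optimality argument (Theorem 3.11). `Xh` is the discrete
space (an additive group), `u ∈ Xext` the exact solution, `U ∈ Xh` the discrete solution.
`S W` stands for `sup_{V ≠ 0} B(W, V)/‖V‖₂`, `N` is the discrete trial norm, and `ERR`
the error functional (nonnegative). Assuming the stability estimate
`c_stab·N(U − Ũ) ≤ S(U − Ũ)`, the consistency estimate `S(U − Ũ) ≤ C_cons·ERR(u, Ũ)`,
and the triangle inequality `ERR(u, U) ≤ ERR(u, Ũ) + N(U − Ũ)`, we get quasi-optimality:
`ERR(u, U) ≤ (1 + C_cons/c_stab)·inf_{Ũ ∈ Xh} ERR(u, Ũ)`. -/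
theorem stmt16 {Xext Xh : Type*} [AddCommGroup Xh]
    (ERR : Xext → Xh → ℝ) (N : Xh → ℝ) (S : Xh → ℝ)
    (u : Xext) (U : Xh) (c_stab C_cons : ℝ) (hc : 0 < c_stab) (hC : 0 < C_cons)
    (hERRnn : ∀ Ut : Xh, 0 ≤ ERR u Ut)
    (hstab : ∀ Ut : Xh, c_stab * N (U - Ut) ≤ S (U - Ut))
    (hcons : ∀ Ut : Xh, S (U - Ut) ≤ C_cons * ERR u Ut)
    (htri : ∀ Ut : Xh, ERR u U ≤ ERR u Ut + N (U - Ut)) :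
    ERR u U ≤ (1 + C_cons / c_stab) * ⨅ Ut : Xh, ERR u Ut := by
  have hq : 0 < 1 + C_cons / c_stab := by positivity
  rw [← div_le_iff₀' hq]
  apply le_ciInf
  intro Ut
  rw [div_le_iff₀' hq]
  have hN : N (U - Ut) ≤ C_cons / c_stab * ERR u Ut := by
    rw [div_mul_eq_mul_div, le_div_iff₀ hc, mul_comm]
    exact (hstab Ut).trans (hcons Ut)
  calc ERR u U ≤ ERR u Ut + N (U - Ut) := htri Ut
    _ ≤ ERR u Ut + C_cons / c_stab * ERR u Ut := by linarith
    _ = (1 + C_cons / c_stab) * ERR u Ut := by ring
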